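/- Let Λ = ℚ[p_1, p_2, …] be the polynomial ring over ℚ in countably many variables p_k indexed by positive integers. Define h_m ∈ Λ by h_0 = 1 and m·h_m = Σ_{i=1}^m p_i·h_{m−i} for m ≥ 1; for n ≥ 1 let D_n be the unique ℚ-linear derivation of Λ with D_n(p_k) = k^n for all k ≥ 1; and for r ∈ ℕ let ε_r : Λ → ℚ be the ℚ-algebra homomorphism with ε_r(p_k) = r. Let a_1, …, a_h be positive integers (h ≥ 1), let t = #{i : a_i = 1}, and let |a| = a_1 + ⋯ + a_h. Then for all m ≥ 0 and r ≥ 1, ε_r((D_{a_1} ∘ ⋯ ∘ D_{a_h})(h_m)) = Σ_{b} (∏_{i=1}^h E(a_i−1, b_i−1)) · C(r+m+|b|−t−1, r+|a|−1), where the sum runs over all tuples b = (b_1,…,b_h) with 1 ≤ b_i ≤ a_i for each i, |b| = b_1 + ⋯ + b_h, C(·,·) is the binomial coefficient, and E(·,·) are the Eulerian numbers. -/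

import Mathlib

/-!
Work with generating functions in an auxiliary variable `X`; `mk 1 = Σ X^k` plays the role of
`(1 - X)⁻¹`. The recurrence says `X 𝓗' = 𝓟 𝓗` for `𝓗 = Σ h_m X^m` and `𝓟 = Σ p_k X^k`, so
formally `𝓗 = exp (Σ p_k X^k / k)`. Hence `D_n 𝓗 = (Σ_{k ≥ 1} k^(n-1) X^k) 𝓗` and
`ε_r 𝓗 = (1 - X)^(-r)`, and the left-hand sides, as a series in `m`, add up to
`∏_i (Σ_{k ≥ 1} k^(a_i - 1) X^k) · (1 - X)^(-r)`. Worpitzky's identity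
`k^s = Σ_j E(s,j) C(k+j, s)` rewrites each factor as
`Σ_b E(a-1, b-1) X^(a-b+[a=1]) (1 - X)^(-a)`; expanding the product and reading off the
coefficient of `X^m` gives the formula.
-/

open MvPolynomial

/-- The derivation `D_n` of `Λ = ℚ[p_1, p_2, …]` with `D_n(p_k) = k^n` for all `k ≥ 1`. -/
noncomputable def Dn (n : ℕ) : Derivation ℚ (MvPolynomial ℕ+ ℚ) (MvPolynomial ℕ+ ℚ) :=
  mkDerivation ℚ fun k : ℕ+ => C (((k : ℕ) : ℚ) ^ n)

/-- The `ℚ`-algebra homomorphism `ε_r : Λ → ℚ` with `ε_r(p_k) = r` for all `k ≥ 1`. -/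
noncomputable def epsHom (r : ℚ) : MvPolynomial ℕ+ ℚ →ₐ[ℚ] ℚ :=
  aeval fun _ : ℕ+ => r

/-- Eulerian numbers: `E(0,0) = 1`, `E(0,j) = 0` for `j ≥ 1`, vanishing for negative second
argument, and `E(n,j) = (j+1)·E(n-1,j) + (n-j)·E(n-1,j-1)` for `n ≥ 1`. -/
def eulerianNum : ℕ → ℕ → ℕ
  | 0, 0 => 1
  | 0, _ + 1 => 0
  | n + 1, 0 => eulerianNum n 0
  | n + 1, j + 1 => (j + 2) * eulerianNum n (j + 1) + (n - j) * eulerianNum n j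

open Finset

theorem eulerianNum_eq_zero_of_lt {n j : ℕ} (h : n < j) : eulerianNum n j = 0 := by
  induction n generalizing j with
  | zero => obtain ⟨j, rfl⟩ := Nat.exists_eq_add_one_of_ne_zero h.ne'; rfl
  | succ n ih =>
    obtain ⟨j, rfl⟩ := Nat.exists_eq_add_one_of_ne_zero (Nat.ne_zero_of_lt h)
    simp [eulerianNum, ih (by omega : n < j + 1), Nat.sub_eq_zero_of_le (by omega : n ≤ j)]

theorem mul_add_choose {k j s : ℕ} (hj : j ≤ s) :
    k * (k + j).choose s =
      (j + 1) * (k + j).choose (s + 1) + (s - j) * (k + j + 1).choose (s + 1) := by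
  rcases le_or_gt s (k + j) with hs | hs
  · have key := Nat.choose_succ_right_eq (k + j) s
    rw [Nat.choose_succ_succ']
    zify [hj, hs] at key ⊢
    linear_combination -key
  · simp [Nat.choose_eq_zero_of_lt hs, Nat.choose_eq_zero_of_lt (hs.trans (lt_add_one s)),
      Nat.choose_eq_zero_of_lt (by omega : k + j + 1 < s + 1)]

/-- Worpitzky's identity. -/
theorem pow_eq_sum_eulerianNum_mul_choose (s k : ℕ) :
    k ^ s = ∑ j ∈ range (s + 1), eulerianNum s j * (k + j).choose s := by
  induction s with
  | zero => simp [eulerianNum]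
  | succ s ih =>
    have hshift : ∑ j ∈ range (s + 1), (j + 1) * eulerianNum s j * (k + j).choose (s + 1) =
        ∑ j ∈ range (s + 2), (j + 1) * eulerianNum s j * (k + j).choose (s + 1) := by
      rw [sum_range_succ _ (s + 1), eulerianNum_eq_zero_of_lt (lt_add_one s)]
      simp
    calc k ^ (s + 1)
        = ∑ j ∈ range (s + 1), ((j + 1) * eulerianNum s j * (k + j).choose (s + 1)
            + (s - j) * eulerianNum s j * (k + j + 1).choose (s + 1)) := by
          rw [pow_succ, ih, sum_mul]
          refine sum_congr rfl fun j hj => ?_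
          rw [mul_assoc, mul_comm _ k, mul_add_choose (mem_range_succ_iff.1 hj)]
          ring
      _ = ∑ j ∈ range (s + 2), eulerianNum (s + 1) j * (k + j).choose (s + 1) := by
          rw [sum_add_distrib, hshift, sum_range_succ', sum_range_succ' _ (s + 1),
            add_right_comm, ← sum_add_distrib]
          congr 1
          · refine sum_congr rfl fun j _ => ?_
            rw [eulerianNum, ← add_assoc]
            ring
          · simp [eulerianNum]

namespace PowerSeries

variable {R A : Type*}

theorem coeff_X_mul_mk_mul [Semiring R] (f : ℕ → R) (F : R⟦X⟧) (m : ℕ) :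
    coeff m (X * mk f * F) = ∑ k ∈ range m, f k * coeff (m - (k + 1)) F := by
  cases m with
  | zero => simp [mul_assoc]
  | succ m =>
    rw [mul_assoc, coeff_succ_X_mul, coeff_mul,
      Nat.sum_antidiagonal_eq_sum_range_succ (fun i j => coeff i (mk f) * coeff j F)]
    simp

theorem coeff_X_mul_derivative [CommSemiring R] (f : R⟦X⟧) (n : ℕ) :
    coeff n (X * d⁄dX R f) = n * coeff n f := by
  cases n with
  | zero => simp
  | succ n => rw [coeff_succ_X_mul, coeff_derivative, mul_comm, Nat.cast_succ]

/-- Since `B(0) = 0`, the `n`-th coefficient of `X F' = S + B F` determines `n F_n` from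
`F_0, …, F_{n-1}`. -/
theorem eq_of_X_mul_derivative_eq [CommRing R] [IsAddTorsionFree R] {B S F G : R⟦X⟧}
    (hB : constantCoeff B = 0) (hF : X * d⁄dX R F = S + B * F)
    (hG : X * d⁄dX R G = S + B * G) (h0 : constantCoeff F = constantCoeff G) : F = G := by
  rw [← sub_eq_zero]
  have hZ : X * d⁄dX R (F - G) = B * (F - G) := by rw [map_sub, mul_sub, hF, hG]; ring
  ext n
  induction n using Nat.strong_induction_on with
  | _ n ih =>
    rcases n with _ | n
    · simp [h0]
    · have hn := congrArg (coeff (n + 1)) hZ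
      rw [coeff_X_mul_derivative, coeff_mul, ← nsmul_eq_mul, sum_eq_zero] at hn
      · exact nsmul_right_injective n.succ_ne_zero (hn.trans (smul_zero _).symm)
      · rintro ⟨_ | i, j⟩ hij
        · simp [hB]
        · rw [ih j (by simp at hij; omega), map_zero, mul_zero]

theorem X_mul_derivative_mk_of_recurrence [CommSemiring A] {p H : ℕ → A}
    (hrec : ∀ m, 1 ≤ m → m • H m = ∑ i ∈ range m, p i * H (m - (i + 1))) :
    X * d⁄dX A (mk H) = X * mk p * mk H := by
  ext (_ | m)
  · simp
  · rw [coeff_X_mul_derivative, coeff_X_mul_mk_mul, coeff_mk, ← nsmul_eq_mul, hrec _ m.succ_pos]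
    simp

theorem _root_.Derivation.apply_coeff_mul [CommSemiring R] [CommSemiring A] [Algebra R A]
    (D : Derivation R A A) (F G : A⟦X⟧) (n : ℕ) :
    D (coeff n (F * G)) =
      coeff n (F * mk (fun k => D (coeff k G)) + mk (fun k => D (coeff k F)) * G) := by
  simp only [coeff_mul, map_add, map_sum, coeff_mk, ← sum_add_distrib, Derivation.leibniz,
    smul_eq_mul]
  exact sum_congr rfl fun _ _ => by ring

/-- Formally `F = F(0) · exp ∫ P dX / X`, so `D F = (∫ D P dX / X) · F`. -/
theorem mk_derivation_coeff_eq_mul [CommSemiring R] [CommRing A] [Algebra R A]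
    [IsAddTorsionFree A] (D : Derivation R A A) {F P Q : A⟦X⟧} (hF : X * d⁄dX A F = P * F)
    (hP : constantCoeff P = 0) (hQ : X * d⁄dX A Q = mk fun n => D (coeff n P))
    (hQ0 : constantCoeff Q = 0) (hF0 : D (constantCoeff F) = 0) :
    mk (fun n => D (coeff n F)) = Q * F := by
  refine eq_of_X_mul_derivative_eq hP (S := (mk fun n => D (coeff n P)) * F) ?_ ?_
    (by simp [hF0, hQ0])
  · ext n
    rw [coeff_X_mul_derivative, coeff_mk, ← nsmul_eq_mul, ← map_nsmul, nsmul_eq_mul,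
      ← coeff_X_mul_derivative, hF, Derivation.apply_coeff_mul, add_comm]
  · rw [Derivation.leibniz, smul_eq_mul, smul_eq_mul]
    linear_combination Q * hF + F * hQ

theorem X_mul_derivative_map [CommSemiring R] [CommSemiring A] (φ : A →+* R) (F : A⟦X⟧) :
    X * d⁄dX R (map φ F) = map φ (X * d⁄dX A F) := by
  ext n
  rw [coeff_X_mul_derivative, coeff_map, coeff_map, coeff_X_mul_derivative, map_mul, map_natCast]

theorem X_mul_derivative_mk_one_pow [CommRing R] (r : ℕ) :
    X * d⁄dX R (mk 1 ^ r) = (r : R⟦X⟧) * X * mk 1 * mk 1 ^ r := by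
  have hd : d⁄dX R (mk 1) = mk 1 ^ 2 := by
    ext n
    rw [coeff_derivative, ← Nat.zero_add 1, mk_one_pow_eq_mk_choose_add]
    simp [add_comm]
  rcases r with _ | r
  · simp
  · rw [derivative_pow, hd, Nat.add_sub_cancel]
    ring

theorem map_eq_mk_one_pow [CommRing R] [CommSemiring A] [IsAddTorsionFree R] (φ : A →+* R)
    {F P : A⟦X⟧} (r : ℕ) (hF : X * d⁄dX A F = P * F)
    (hP : map φ P = (r : R⟦X⟧) * X * mk 1) (hF0 : φ (constantCoeff F) = 1) :
    map φ F = mk 1 ^ r := by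
  refine eq_of_X_mul_derivative_eq (B := (r : R⟦X⟧) * X * mk 1) (S := 0) (by simp) ?_ ?_ ?_
  · rw [X_mul_derivative_map, hF, map_mul, hP, zero_add]
  · rw [X_mul_derivative_mk_one_pow, zero_add]
  · rw [← coeff_zero_eq_constantCoeff_apply, coeff_map, coeff_zero_eq_constantCoeff_apply, hF0]
    simp

theorem coeff_X_pow_mul_mk_one_pow [CommRing R] {e N m d : ℕ} (h : e + N = m + d) :
    coeff m (X ^ e * mk 1 ^ (d + 1) : R⟦X⟧) = N.choose d := by
  rw [coeff_X_pow_mul', mk_one_pow_eq_mk_choose_add]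
  split_ifs with he
  · rw [coeff_mk, show d + (m - e) = N by omega]
  · rw [Nat.choose_eq_zero_of_lt (by omega), Nat.cast_zero]

theorem mk_add_choose [CommRing R] {j s : ℕ} (hj : j ≤ s) :
    mk (fun k => ((k + j).choose s : R)) = X ^ (s - j) * mk 1 ^ (s + 1) := by
  ext k
  rw [coeff_mk, coeff_X_pow_mul_mk_one_pow (N := k + j) (by omega)]

theorem mk_pow_eq_sum_eulerianNum [CommRing R] (s : ℕ) :
    mk (fun k => (k : R) ^ s) =
      ∑ j ∈ range (s + 1), eulerianNum s j • (X ^ (s - j) * mk 1 ^ (s + 1)) := by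
  rw [sum_congr rfl fun j hj => by rw [← mk_add_choose (mem_range_succ_iff.1 hj)]]
  ext k
  simp only [coeff_mk, map_sum, map_nsmul]
  rw [← Nat.cast_pow, pow_eq_sum_eulerianNum_mul_choose s k]
  simp

/-- For `a = 1` the series starts at `X^1` while Worpitzky's sum for `k^0` starts at `X^0`;
this extra factor `X` is where `t = #{i | a i = 1}` enters the final formula. -/
theorem X_mul_mk_succ_pow [CommRing R] {a : ℕ} (ha : 1 ≤ a) :
    X * mk (fun k => ((k + 1 : R) ^ (a - 1))) = ∑ b ∈ Icc 1 a,
      eulerianNum (a - 1) (b - 1) • (X ^ (a - b + if a = 1 then 1 else 0) * mk 1 ^ a) := by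
  obtain ⟨s, rfl⟩ := Nat.exists_eq_add_of_le' ha
  rcases Nat.eq_zero_or_pos s with rfl | hs
  · simp [eulerianNum, Pi.one_def]
  have hshift : X * mk (fun k => ((k + 1 : R) ^ s)) = mk (fun k => (k : R) ^ s) := by
    ext (_ | k)
    · simp [hs.ne']
    · simp
  rw [Nat.add_sub_cancel, hshift, mk_pow_eq_sum_eulerianNum, ← Ico_add_one_right_eq_Icc,
    sum_Ico_eq_sum_range, Nat.add_sub_cancel]
  refine sum_congr rfl fun j _ => ?_
  simp [hs.ne', add_comm 1 j]

theorem _root_.Finset.sum_tsub_add_ite_add_sum {ι : Type*} [Fintype ι] {a b : ι → ℕ}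
    (hb : ∀ i, b i ≤ a i) :
    ∑ i, (a i - b i + if a i = 1 then 1 else 0) + ∑ i, b i =
      ∑ i, a i + (Finset.univ.filter fun i => a i = 1).card := by
  rw [card_filter, ← sum_add_distrib, ← sum_add_distrib]
  exact sum_congr rfl fun i _ => by have := hb i; split_ifs <;> omega

theorem coeff_prod_X_mul_mk_succ_pow_mul [CommRing R] {h : ℕ} {a : Fin h → ℕ}
    (ha : ∀ i, 1 ≤ a i) {r : ℕ} (hr : 1 ≤ r) (m : ℕ) :
    coeff m ((∏ i, X * mk fun k => (k + 1 : R) ^ (a i - 1)) * mk 1 ^ r) =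
      ∑ b ∈ Fintype.piFinset fun i => Finset.Icc 1 (a i),
        (∏ i, (eulerianNum (a i - 1) (b i - 1) : R)) *
          ((r + m + (∑ i, b i) - (Finset.univ.filter fun i => a i = 1).card - 1).choose
            (r + (∑ i, a i) - 1) : R) := by
  simp_rw [X_mul_mk_succ_pow (ha _), prod_univ_sum, sum_mul, map_sum]
  refine sum_congr rfl fun b hb => ?_
  have hb' : ∀ i, 1 ≤ b i ∧ b i ≤ a i := by simpa using hb
  have hsum := Finset.sum_tsub_add_ite_add_sum fun i => (hb' i).2
  have hcard : (Finset.univ.filter fun i => a i = 1).card ≤ ∑ i, b i := by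
    rw [card_filter]
    exact sum_le_sum fun i _ => by have := hb' i; split_ifs <;> omega
  rw [prod_smul, prod_mul_distrib, prod_pow_eq_pow_sum, prod_pow_eq_pow_sum, smul_mul_assoc,
    mul_assoc, ← pow_add, show ∑ i, a i + r = (r + ∑ i, a i - 1) + 1 by omega, map_nsmul,
    coeff_X_pow_mul_mk_one_pow (N := r + m + ∑ i, b i - #{i | a i = 1} - 1) (by omega),
    nsmul_eq_mul, Nat.cast_prod]

noncomputable def powerSumSeries : (MvPolynomial ℕ+ ℚ)⟦X⟧ :=
  X * mk fun i => MvPolynomial.X i.succPNat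

variable {H : ℕ → MvPolynomial ℕ+ ℚ}

theorem Dn_apply_eq_sum (hH : X * d⁄dX _ (mk H) = powerSumSeries * mk H) (H0 : H 0 = 1)
    {n : ℕ} (hn : 1 ≤ n) (m : ℕ) :
    Dn n (H m) = ∑ k ∈ range m, ((k + 1 : ℚ) ^ (n - 1)) • H (m - (k + 1)) := by
  have hQ : X * d⁄dX _ (X * mk fun k => MvPolynomial.C ((k + 1 : ℚ) ^ (n - 1))) =
      mk fun k => Dn n (coeff k powerSumSeries) := by
    refine ext fun k => ?_
    rcases k with _ | k
    · simp [powerSumSeries]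
    · rw [coeff_X_mul_derivative, coeff_succ_X_mul, coeff_mk, coeff_mk, powerSumSeries,
        coeff_succ_X_mul, coeff_mk, Dn, mkDerivation_X, ← map_natCast MvPolynomial.C, ← map_mul,
        Nat.succPNat_coe, Nat.cast_succ, ← pow_succ', Nat.sub_add_cancel hn]
  have hD := congrArg (coeff m) (mk_derivation_coeff_eq_mul (Dn n) hH
    (by simp [powerSumSeries]) hQ (by simp) (by simp [H0]))
  rw [coeff_mk, coeff_X_mul_mk_mul] at hD
  simpa [MvPolynomial.smul_eq_C_mul] using hD

theorem map_epsHom_eq_mk_one_pow (hH : X * d⁄dX _ (mk H) = powerSumSeries * mk H)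
    (H0 : H 0 = 1) (r : ℕ) : map (epsHom r).toRingHom (mk H) = mk 1 ^ r := by
  refine map_eq_mk_one_pow _ r hH ?_ (by simp [H0])
  refine ext fun k => ?_
  rcases k with _ | k
  · simp [powerSumSeries]
  · rw [← map_natCast (C (R := ℚ)), mul_assoc, coeff_C_mul, coeff_succ_X_mul]
    simp [powerSumSeries, epsHom]

theorem mk_epsHom_prod_Dn (H0 : H 0 = 1)
    (Hrec : ∀ m : ℕ, 1 ≤ m → (m : ℚ) • H m =
      ∑ i ∈ Finset.range m, MvPolynomial.X i.succPNat * H (m - (i + 1)))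
    (r : ℕ) {h : ℕ} (a : Fin h → ℕ) (ha : ∀ i, 1 ≤ a i) :
    mk (fun m => epsHom r ((List.ofFn fun i => (Dn (a i)).toLinearMap).prod (H m))) =
      (∏ i, X * mk fun k => (k + 1 : ℚ) ^ (a i - 1)) * mk 1 ^ r := by
  have hH : X * d⁄dX _ (mk H) = powerSumSeries * mk H :=
    X_mul_derivative_mk_of_recurrence fun m hm => by rw [← Nat.cast_smul_eq_nsmul ℚ, Hrec m hm]
  induction h with
  | zero =>
    rw [← map_epsHom_eq_mk_one_pow hH H0 r]
    ext m
    simp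
  | succ h ih =>
    ext m
    rw [coeff_mk, List.ofFn_succ', List.prod_concat, Module.End.mul_apply, Derivation.coeFn_coe,
      Dn_apply_eq_sum hH H0 (ha _), Fin.prod_univ_castSucc, mul_comm (∏ _, _), mul_assoc,
      coeff_X_mul_mk_mul, ← ih (fun i => a i.castSucc) (fun i => ha _)]
    simp

end PowerSeries

theorem stmt15_general (H : ℕ → MvPolynomial ℕ+ ℚ) (H0 : H 0 = 1)
    (Hrec : ∀ m : ℕ, 1 ≤ m → (m : ℚ) • H m =
      ∑ i ∈ Finset.range m, X i.succPNat * H (m - (i + 1)))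
    (h : ℕ) (a : Fin h → ℕ) (ha : ∀ i, 1 ≤ a i)
    (m r : ℕ) (hr : 1 ≤ r) :
    epsHom (r : ℚ) ((List.ofFn fun i => (Dn (a i)).toLinearMap).prod (H m)) =
      ∑ b ∈ Fintype.piFinset fun i => Finset.Icc 1 (a i),
        (∏ i, (eulerianNum (a i - 1) (b i - 1) : ℚ)) *
          ((r + m + (∑ i, b i) - (Finset.univ.filter fun i => a i = 1).card - 1).choose
            (r + (∑ i, a i) - 1) : ℚ) := by
  have hgf := congrArg (PowerSeries.coeff m) (PowerSeries.mk_epsHom_prod_Dn H0 Hrec r a ha)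
  rwa [PowerSeries.coeff_mk, PowerSeries.coeff_prod_X_mul_mk_succ_pow_mul ha hr] at hgf

/-- If `h_0 = 1` and `m·h_m = Σ_{i=1}^m p_i·h_{m-i}` for `m ≥ 1`, then for positive integers
`a_1, …, a_h` (`h ≥ 1`), with `t = #{i : a_i = 1}` and `|a| = Σ a_i`, for all `m ≥ 0`, `r ≥ 1`:
`ε_r((D_{a_1} ∘ ⋯ ∘ D_{a_h})(h_m)) = Σ_{1 ≤ b ≤ a} (Π_i E(a_i-1, b_i-1))·C(r+m+|b|-t-1, r+|a|-1)`. -/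
theorem stmt15 (H : ℕ → MvPolynomial ℕ+ ℚ) (H0 : H 0 = 1)
    (Hrec : ∀ m : ℕ, 1 ≤ m → (m : ℚ) • H m =
      ∑ i ∈ Finset.range m, X i.succPNat * H (m - (i + 1)))
    (h : ℕ) (hh : 1 ≤ h) (a : Fin h → ℕ) (ha : ∀ i, 1 ≤ a i)
    (m r : ℕ) (hr : 1 ≤ r) :
    epsHom (r : ℚ) ((List.ofFn fun i => (Dn (a i)).toLinearMap).prod (H m)) =
      ∑ b ∈ Fintype.piFinset fun i => Finset.Icc 1 (a i),
        (∏ i, (eulerianNum (a i - 1) (b i - 1) : ℚ)) *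
          ((r + m + (∑ i, b i) - (Finset.univ.filter fun i => a i = 1).card - 1).choose
            (r + (∑ i, a i) - 1) : ℚ) :=
  stmt15_general H H0 Hrec h a ha m r hr
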